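/- arXiv:1805.08938 — 4 statements merged into one kernel-verified Lean document; each statement's English description precedes it below -/
import Mathlib

section
/- For any finite set A of positive integers with |A| ≥ 2 and any positive integer m, the m-fold sumset of the restricted sumset satisfies |m·Σ*A| ≥ (1/2)·|A|²·m. -/
/-!
A set of `n` positive integers has more than `(n + 1).choose 2` subset sums (Nathanson), and
iterating Cauchy–Davenport in `ℤ` gives `|m • S| ≥ m (|S| - 1) + 1`. Hence
`2 |m Σ* A| ≥ m n (n + 1) + 2 ≥ m n²`.
-/

open Pointwise

/-- The restricted sumset `Σ* A` of a finite set of integers. -/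
def restrictedSumset (A : Finset ℤ) : Finset ℤ :=
  A.powerset.image (fun B => B.sum id)

open Finset in
theorem Finset.mul_card_add_one_le_card_nsmul_add {α : Type*} [LinearOrder α]
    [AddCancelMonoid α] [AddLeftMono α] [AddRightMono α] {s : Finset α} (hs : s.Nonempty)
    (m : ℕ) : m * #s + 1 ≤ #(m • s) + m := by
  induction m with
  | zero => simp
  | succ m ih =>
    have hms : (m • s).Nonempty := hs.nsmul
    have hCD : #s + #(m • s) - 1 ≤ #(s + m • s) :=
      cauchy_davenport_add_of_linearOrder_isCancelAdd hs hms
    rw [succ_nsmul', add_one_mul]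
    have hms_card : 0 < #(m • s) := hms.card_pos
    omega

theorem restrictedSumset_eq_subsetSum (A : Finset ℤ) : restrictedSumset A = A.subsetSum := rfl

theorem msmul_restrictedSumset_card_general (A : Finset ℤ) (hpos : ∀ a ∈ A, 0 < a) (m : ℕ) :
    A.card ^ 2 * m ≤ 2 * (m • restrictedSumset A).card := by
  rw [restrictedSumset_eq_subsetSum]
  have hsums := Finset.card_succ_choose_two_lt_card_subsetSum_of_pos hpos
  have hchoose : (A.card + 1).choose 2 * 2 = (A.card + 1) * A.card := by
    rw [← Nat.add_one_mul_choose_eq, Nat.choose_one_right]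
  have hnsmul := Finset.mul_card_add_one_le_card_nsmul_add (Finset.subsetSum_nonempty (A := A)) m
  nlinarith

/-- For a finite set `A` of positive integers with `|A| ≥ 2` and any `m ≥ 1`, the `m`-fold
sumset of the restricted sumset satisfies `|m Σ* A| ≥ |A|² m / 2`. -/
theorem msmul_restrictedSumset_card (A : Finset ℤ) (hpos : ∀ a ∈ A, 0 < a)
    (hA : 2 ≤ A.card) (m : ℕ) (hm : 1 ≤ m) :
    A.card ^ 2 * m ≤ 2 * (m • restrictedSumset A).card :=
  msmul_restrictedSumset_card_general A hpos m
end

section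
/- Let A be a Sidon set of positive integers and let X ⊆ A with |X| ≤ (1/2)|A| and |Σ*X| ≤ C(⌊|A|/2⌋, 2). Then there exist two distinct elements a₁, a₂ ∈ A \ X such that, setting X' = X ∪ {a₁, a₂}, one has |Σ*X'| ≥ (3/2)|Σ*X|. -/
/-- `A` is a Sidon set: all sums of two (not necessarily distinct) elements are determined
by the unordered pair. -/
def IsSidonSet (A : Finset ℤ) : Prop :=
  ∀ a ∈ A, ∀ b ∈ A, ∀ c ∈ A, ∀ d ∈ A, a + b = c + d → (a = c ∧ b = d) ∨ (a = d ∧ b = c)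

open Finset
open scoped Pointwise

namespace Finset

section OrderedGroup

variable {G : Type*} [AddCommGroup G] [LinearOrder G] [IsOrderedAddMonoid G] [DecidableEq G]
  {S T : Finset G}

-- `(t, x) ↦ {x - t, x}` embeds the pairs counted on the left into the 2-subsets of `S`;
-- `x` is recovered as the larger element and `t` as the difference.
lemma sum_card_inter_vadd_le_choose_two (hT : ∀ t ∈ T, 0 < t) :
    ∑ t ∈ T, #(S ∩ (t +ᵥ S)) ≤ (#S).choose 2 := by
  rw [← card_sigma, ← card_powersetCard]
  refine card_le_card_of_injOn (fun p => {p.2 - p.1, p.2}) ?_ ?_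
  · rintro ⟨t, x⟩ hp
    simp only [coe_sigma, Set.mem_sigma_iff, mem_coe, mem_inter, mem_vadd_finset] at hp
    obtain ⟨ht, hx, y, hy, rfl⟩ := hp
    simp only [mem_coe, mem_powersetCard, vadd_eq_add, add_sub_cancel_left]
    exact ⟨insert_subset hy (singleton_subset_iff.2 hx),
      card_pair (lt_add_of_pos_left y (hT t ht)).ne⟩
  · rintro ⟨t, x⟩ hp ⟨t', x'⟩ hp' h
    replace h : ({x - t, x} : Finset G) = {x' - t', x'} := h
    have ht := hT t (mem_sigma.1 hp).1
    have ht' := hT t' (mem_sigma.1 hp').1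
    have hx : x ∈ ({x' - t', x'} : Finset G) := by rw [← h]; simp
    have hx' : x' ∈ ({x - t, x} : Finset G) := by rw [h]; simp
    have hxt : x - t ∈ ({x' - t', x'} : Finset G) := by rw [← h]; simp
    simp only [mem_insert, mem_singleton] at hx hx' hxt
    obtain rfl : x = x' := by
      rcases hx with hx | hx
      · rcases hx' with hx' | hx'
        · have h₁ : x < x' := by rw [hx]; exact sub_lt_self x' ht'
          have h₂ : x' < x := by rw [hx']; exact sub_lt_self x ht
          exact (lt_irrefl x (h₁.trans h₂)).elim
        · exact hx'.symm
      · exact hx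
    rcases hxt with hxt | hxt
    · rw [sub_right_injective hxt]
    · exact absurd (sub_eq_self.1 hxt) ht.ne'

lemma exists_two_mul_card_inter_vadd_le (hT : ∀ t ∈ T, 0 < t) (hTne : T.Nonempty)
    (hST : #S ≤ #T) : ∃ t ∈ T, 2 * #(S ∩ (t +ᵥ S)) ≤ #S := by
  refine exists_le_of_sum_le hTne ?_
  calc ∑ t ∈ T, 2 * #(S ∩ (t +ᵥ S))
      = 2 * ∑ t ∈ T, #(S ∩ (t +ᵥ S)) := by rw [mul_sum]
    _ ≤ 2 * (#S).choose 2 := by gcongr; exact sum_card_inter_vadd_le_choose_two hT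
    _ ≤ #S * #S := by
        rw [Nat.choose_two_right]
        exact (Nat.mul_div_le _ 2).trans (Nat.mul_le_mul_left _ (Nat.sub_le _ 1))
    _ ≤ ∑ _t ∈ T, #S := by rw [sum_const, smul_eq_mul]; gcongr

end OrderedGroup

lemma three_mul_card_le_two_mul_card_union_vadd {G : Type*} [AddGroup G] [DecidableEq G]
    {S : Finset G} {t : G} (h : 2 * #(S ∩ (t +ᵥ S)) ≤ #S) :
    3 * #S ≤ 2 * #(S ∪ (t +ᵥ S)) := by
  have := card_union_add_card_inter S (t +ᵥ S)
  rw [card_vadd_finset] at this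
  omega

lemma add_vadd_subsetSum_subset_subsetSum_insert_insert {M : Type*} [DecidableEq M]
    [AddCommMonoid M] {X : Finset M} {a b : M} (hab : a ≠ b) (ha : a ∉ X) (hb : b ∉ X) :
    (a + b) +ᵥ X.subsetSum ⊆ (insert a (insert b X)).subsetSum := by
  rw [← vadd_vadd]
  calc a +ᵥ b +ᵥ X.subsetSum
      ⊆ a +ᵥ (insert b X).subsetSum :=
        vadd_finset_subset_vadd_finset (vadd_finset_subsetSum_subset_subsetSum_insert hb)
    _ ⊆ (insert a (insert b X)).subsetSum :=
        vadd_finset_subsetSum_subset_subsetSum_insert (by simp [hab, ha])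

end Finset

lemma restrictedSumset_eq_subsetSum_s3 (X : Finset ℤ) : restrictedSumset X = X.subsetSum := rfl

def pairSums (D : Finset ℤ) : Finset ℤ :=
  (D.powersetCard 2).image fun B => B.sum id

lemma mem_pairSums {D : Finset ℤ} {t : ℤ} :
    t ∈ pairSums D ↔ ∃ a ∈ D, ∃ b ∈ D, a ≠ b ∧ a + b = t := by
  simp only [pairSums, mem_image, mem_powersetCard, card_eq_two]
  constructor
  · rintro ⟨_, ⟨hB, a, b, hab, rfl⟩, rfl⟩
    exact ⟨a, hB (by simp), b, hB (by simp), hab, by simp [sum_pair hab]⟩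
  · rintro ⟨a, ha, b, hb, hab, rfl⟩
    exact ⟨{a, b}, ⟨insert_subset ha (singleton_subset_iff.2 hb), a, b, hab, rfl⟩,
      by simp [sum_pair hab]⟩

lemma IsSidonSet.mono {A B : Finset ℤ} (hA : IsSidonSet A) (hBA : B ⊆ A) : IsSidonSet B :=
  fun a ha b hb c hc d hd => hA a (hBA ha) b (hBA hb) c (hBA hc) d (hBA hd)

lemma IsSidonSet.card_pairSums {A : Finset ℤ} (hA : IsSidonSet A) :
    #(pairSums A) = (#A).choose 2 := by
  rw [pairSums, card_image_of_injOn, card_powersetCard]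
  intro B hB C hC hBC
  simp only [mem_coe, mem_powersetCard, card_eq_two] at hB hC
  obtain ⟨hBA, a, b, hab, rfl⟩ := hB
  obtain ⟨hCA, c, d, hcd, rfl⟩ := hC
  have hsum : a + b = c + d := by simpa [sum_pair hab, sum_pair hcd] using hBC
  rcases hA a (hBA (by simp)) b (hBA (by simp)) c (hCA (by simp)) d (hCA (by simp)) hsum with
    ⟨rfl, rfl⟩ | ⟨rfl, rfl⟩
  · rfl
  · exact pair_comm a b

/-- Growing step for small restricted sumsets: if `A` is Sidon, `X ⊆ A` with
`|X| ≤ |A|/2` and `|Σ*X| ≤ C(⌊|A|/2⌋, 2)`, then two new elements of `A` can be added to `X`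
so that the restricted sumset grows by a factor of `3/2`. -/
theorem sidon_small_step (A X : Finset ℤ) (hpos : ∀ a ∈ A, 0 < a) (hSidon : IsSidonSet A)
    (hXA : X ⊆ A) (hXcard : 2 * X.card ≤ A.card)
    (hsmall : (restrictedSumset X).card ≤ (A.card / 2).choose 2) :
    ∃ a₁ ∈ A \ X, ∃ a₂ ∈ A \ X, a₁ ≠ a₂ ∧
      3 * (restrictedSumset X).card ≤ 2 * (restrictedSumset (insert a₁ (insert a₂ X))).card := by
  simp only [restrictedSumset_eq_subsetSum_s3] at hsmall ⊢
  have hD : #A / 2 ≤ #(A \ X) := by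
    rw [card_sdiff_of_subset hXA]
    have := card_le_card hXA
    omega
  have hT : #X.subsetSum ≤ #(pairSums (A \ X)) := by
    rw [(hSidon.mono sdiff_subset).card_pairSums]
    exact hsmall.trans (Nat.choose_le_choose 2 hD)
  have hTpos : ∀ t ∈ pairSums (A \ X), 0 < t := by
    rintro _ ht
    obtain ⟨a, ha, b, hb, -, rfl⟩ := mem_pairSums.1 ht
    exact add_pos (hpos a (sdiff_subset ha)) (hpos b (sdiff_subset hb))
  have hTne : (pairSums (A \ X)).Nonempty := card_pos.1 (subsetSum_nonempty.card_pos.trans_le hT)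
  obtain ⟨t, ht, hoverlap⟩ := exists_two_mul_card_inter_vadd_le hTpos hTne hT
  obtain ⟨a₁, ha₁, a₂, ha₂, hne, rfl⟩ := mem_pairSums.1 ht
  refine ⟨a₁, ha₁, a₂, ha₂, hne, ?_⟩
  calc 3 * #X.subsetSum
      ≤ 2 * #(X.subsetSum ∪ ((a₁ + a₂) +ᵥ X.subsetSum)) :=
        three_mul_card_le_two_mul_card_union_vadd hoverlap
    _ ≤ 2 * #(insert a₁ (insert a₂ X)).subsetSum := by
        gcongr
        exact union_subset (subsetSum_mono ((subset_insert _ _).trans (subset_insert _ _)))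
          (add_vadd_subsetSum_subset_subsetSum_insert_insert hne (mem_sdiff.1 ha₁).2
            (mem_sdiff.1 ha₂).2)
end

section
/- Let B and S be finite sets of integers with |S| = |B|, where S consists of integers and all elements of B are positive. Then the number of ordered pairs (s, b) ∈ S × B with s + b ∈ S is at most C(|B|, 2), and hence there exists b ∈ B such that |(S + b) \ S| ≥ |B|/2 (assuming |B| ≥ 1). -/
/-!
As `b > 0`, the map `(s, b) ↦ (s, s + b)` sends the pairs with `s + b ∈ S` injectively to
pairs `s < s'` of elements of `S`, of which there are `C(|S|, 2)`. Since
`|(S + b) \ S| = |S| - #{s ∈ S | s + b ∈ S}`, summing over `b ∈ B` gives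
`∑ b, |(S + b) \ S| ≥ |B|² - C(|B|, 2) ≥ |B|² / 2`, and some `b` is at least the average.
-/

open Finset

theorem card_filter_add_mem_le_choose_two {G : Type*} [AddCommMonoid G] [LinearOrder G]
    [IsOrderedCancelAddMonoid G] (S B : Finset G) (hB : ∀ b ∈ B, 0 < b) :
    #{p ∈ S ×ˢ B | p.1 + p.2 ∈ S} ≤ (#S).choose 2 := by
  rw [← card_product_filter_lt]
  refine card_le_card_of_injOn (fun p => (p.1, p.1 + p.2)) (fun p hp => ?_) ?_
  · simp only [coe_filter, mem_product, Set.mem_ofPred_eq] at hp ⊢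
    exact ⟨⟨hp.1.1, hp.2⟩, lt_add_of_pos_right _ (hB _ hp.1.2)⟩
  · rintro ⟨s, b⟩ _ ⟨s', b'⟩ _ h
    obtain ⟨rfl, hsum⟩ := Prod.ext_iff.1 h
    exact Prod.ext rfl (add_left_cancel hsum)

theorem card_image_sdiff_add_card_filter_mem {α : Type*} [DecidableEq α] {f : α → α}
    (hf : Function.Injective f) (S : Finset α) :
    #(S.image f \ S) + #{s ∈ S | f s ∈ S} = #S := by
  rw [sdiff_eq_filter, filter_image, card_image_of_injective _ hf, add_comm]
  exact card_filter_add_card_filter_not _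

theorem sum_card_filter_eq_card_filter_product {α β : Type*} (A : Finset α) (B : Finset β)
    (p : α → β → Prop) [∀ a b, Decidable (p a b)] :
    ∑ b ∈ B, #{a ∈ A | p a b} = #{x ∈ A ×ˢ B | p x.1 x.2} := by
  simp only [card_filter, sum_product_right]

/-- Let `S`, `B` be finite sets of integers with `|S| = |B|` and all elements of `B`
positive. Then the number of pairs `(s, b) ∈ S × B` with `s + b ∈ S` is at most
`C(|B|, 2)`, and hence (if `B` is nonempty) some `b ∈ B` has `|(S + b) \ S| ≥ |B|/2`. -/
theorem escape_count (S B : Finset ℤ) (hB : ∀ b ∈ B, 0 < b) (hcard : S.card = B.card) :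
    ((S ×ˢ B).filter (fun p => p.1 + p.2 ∈ S)).card ≤ B.card.choose 2 ∧
      (1 ≤ B.card → ∃ b ∈ B, B.card ≤ 2 * (S.image (fun s => s + b) \ S).card) := by
  have hpairs := card_filter_add_mem_le_choose_two S B hB
  rw [hcard] at hpairs
  refine ⟨hpairs, fun hn => exists_le_of_sum_le (card_pos.1 hn) ?_⟩
  have hsplit : ∑ b ∈ B, #(S.image (· + b) \ S) + #{p ∈ S ×ˢ B | p.1 + p.2 ∈ S} = #B * #B := by
    rw [← sum_card_filter_eq_card_filter_product S B (fun s b => s + b ∈ S), ← sum_add_distrib,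
      sum_congr rfl fun b _ => card_image_sdiff_add_card_filter_mem (add_left_injective b) S,
      sum_const, smul_eq_mul, hcard]
  have hchoose : 2 * (#B).choose 2 ≤ #B * #B := by
    rw [Nat.choose_two_right]
    exact (Nat.mul_div_le _ 2).trans (Nat.mul_le_mul_left _ (Nat.sub_le _ 1))
  rw [sum_const, smul_eq_mul, ← mul_sum]
  omega
end

section
/- Let k ≥ 1 and let b₁ < b₂ < ... < b_{2k} be positive integers, and m ≥ 1. Consider all multisets obtained by choosing elements from {b₁, ..., b_{2k}} with each element used at most m times and total multiplicity exactly mk. The set of attainable sums contains at least mk² + 1 distinct values; in particular, the sums range over at least mk² + 1 distinct integers between m(b₁ + ... + b_k) and m(b_{k+1} + ... + b_{2k}). -/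
/-!
Think of a multiplicity vector `c` as `m * k` tokens on the positions `0, …, 2k - 1`, at most `m`
per position; its sum `∑ cᵢ bᵢ` is the sum of `b` over the positions of the tokens. Start with
the tokens stacked on the lowest `k` positions and let them climb `k` positions each, one token
and one position at a time. Each of the `m k²` steps raises the sum strictly, so the walk visits
`m k² + 1` distinct sums.

For the bounds put `d = c - m · 1_{i < k}` and `θ = b_{k-1}`: then `∑ d = 0`, so
`∑ c b - m ∑_{i < k} b = ∑ d (b - θ)`, a sum of nonnegative terms; the upper bound is symmetric.
-/

open Finset

theorem mul_sum_le_sum_mul_of_threshold {ι R : Type*} [DecidableEq ι] [CommRing R] [LinearOrder R]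
    [IsStrictOrderedRing R] {s A : Finset ι} (hA : A ⊆ s) {c b : ι → R} {m θ : R}
    (hc₀ : ∀ i ∈ s, 0 ≤ c i) (hcm : ∀ i ∈ s, c i ≤ m) (hc : ∑ i ∈ s, c i = #A * m)
    (hbA : ∀ i ∈ A, b i ≤ θ) (hbs : ∀ i ∈ s, i ∉ A → θ ≤ b i) :
    m * ∑ i ∈ A, b i ≤ ∑ i ∈ s, c i * b i := by
  set d : ι → R := fun i => c i - if i ∈ A then m else 0
  have hd : ∑ i ∈ s, d i = 0 := by
    simp [d, sum_sub_distrib, sum_ite_mem, inter_eq_right.2 hA, hc]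
  have hdb : ∑ i ∈ s, d i * b i = ∑ i ∈ s, c i * b i - m * ∑ i ∈ A, b i := by
    simp [d, sub_mul, ite_mul, sum_sub_distrib, sum_ite_mem, inter_eq_right.2 hA, mul_sum]
  have hdθ : ∑ i ∈ s, d i * (b i - θ) = ∑ i ∈ s, d i * b i := by
    simp [mul_sub, sum_sub_distrib, ← sum_mul, hd]
  have hnonneg : 0 ≤ ∑ i ∈ s, d i * (b i - θ) := sum_nonneg fun i hi => by
    by_cases hiA : i ∈ A
    · simp only [d, if_pos hiA]
      exact mul_nonneg_of_nonpos_of_nonpos (by linarith [hcm i hi]) (by linarith [hbA i hiA])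
    · simp only [d, if_neg hiA, sub_zero]
      exact mul_nonneg (hc₀ i hi) (by linarith [hbs i hi hiA])
  linarith

section halves

variable {k m : ℕ} (hk : 1 ≤ k) {b : Fin (2 * k) → ℤ} (hb : Monotone b) {c : Fin (2 * k) → ℕ}
  (hcm : ∀ i, c i ≤ m) (hc : ∑ i, c i = m * k)
include hk hb hcm hc

theorem mul_sum_lower_half_le :
    (m : ℤ) * ∑ i ∈ univ.filter (fun i : Fin (2 * k) => (i : ℕ) < k), b i ≤
      ∑ i, (c i : ℤ) * b i := by
  refine mul_sum_le_sum_mul_of_threshold (c := fun i => (c i : ℤ)) (m := (m : ℤ))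
    (θ := b ⟨k - 1, by omega⟩) (subset_univ _) (fun i _ => by positivity)
    (fun i _ => by exact_mod_cast hcm i) ?_ ?_ ?_
  · rw [Fin.card_filter_val_lt, min_eq_right (by omega)]
    exact_mod_cast hc.trans (mul_comm _ _)
  · simp only [mem_filter, mem_univ, true_and]
    exact fun i hi => hb (Fin.mk_le_mk.2 (by omega))
  · simp only [mem_filter, mem_univ, true_and, not_lt, forall_const]
    exact fun i hi => hb (Fin.le_def.2 (by simp; omega))

theorem sum_mul_le_mul_sum_upper_half :
    ∑ i, (c i : ℤ) * b i ≤
      (m : ℤ) * ∑ i ∈ univ.filter (fun i : Fin (2 * k) => k ≤ (i : ℕ)), b i := by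
  have hcard : #(univ.filter (fun i : Fin (2 * k) => k ≤ (i : ℕ))) = k := by
    have := card_filter_add_card_filter_not (s := (univ : Finset (Fin (2 * k))))
      (fun i => (i : ℕ) < k)
    simp only [Fin.card_filter_val_lt, not_lt, card_univ, Fintype.card_fin] at this
    omega
  have h := mul_sum_le_sum_mul_of_threshold (c := fun i => (c i : ℤ)) (m := (m : ℤ)) (b := -b)
    (A := univ.filter (fun i : Fin (2 * k) => k ≤ (i : ℕ))) (θ := -b ⟨k, by omega⟩)
    (subset_univ _) (fun i _ => by positivity) (fun i _ => by exact_mod_cast hcm i) ?_ ?_ ?_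
  · simpa [mul_neg, sum_neg_distrib] using h
  · rw [hcard]
    exact_mod_cast hc.trans (mul_comm _ _)
  · simp only [mem_filter, mem_univ, true_and, Pi.neg_apply, neg_le_neg_iff]
    exact fun i hi => hb (Fin.mk_le_mk.2 (by omega))
  · simp only [mem_filter, mem_univ, true_and, not_le, forall_const, Pi.neg_apply,
      neg_le_neg_iff]
    exact fun i hi => hb (Fin.le_def.2 (by simp; omega))

end halves

def boundedMultiplicitySums (n m N : ℕ) (b : Fin n → ℤ) : Finset ℤ :=
  (univ.filter (fun c : Fin n → Fin (m + 1) => ∑ i, (c i : ℕ) = N)).image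
    (fun c => ∑ i, ((c i : ℕ) : ℤ) * b i)

theorem sum_comp_mem_boundedMultiplicitySums {n m N : ℕ} (f : Fin N → Fin n)
    (hf : ∀ i, #{j | f j = i} ≤ m) (b : Fin n → ℤ) :
    ∑ j, b (f j) ∈ boundedMultiplicitySums n m N b := by
  refine mem_image.2 ⟨fun i => ⟨#{j | f j = i}, Nat.lt_succ_of_le (hf i)⟩,
    mem_filter.2 ⟨mem_univ _, ?_⟩, ?_⟩
  · simpa using (card_eq_sum_card_fiberwise (f := f) (s := univ) (t := univ) (by simp)).symm
  · simp [← sum_fiberwise' univ f b, sum_const]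

theorem card_fiber_le_of_div_eq {m k : ℕ} {β : Type*} [DecidableEq β] {f : Fin (m * k) → β}
    (hf : ∀ j j', f j = f j' → (j : ℕ) / m = j' / m) (y : β) : #{j | f j = y} ≤ m := by
  calc #{j | f j = y} ≤ #(range m) := by
        refine card_le_card_of_injOn (fun j => (j : ℕ) % m) (fun j _ => ?_) fun j hj j' hj' h => ?_
        · exact mem_range.2 (Nat.mod_lt _ (Nat.pos_of_mul_pos_right j.pos))
        · simp only [coe_filter, mem_univ, true_and, Set.mem_ofPred_eq] at hj hj'
          have hdiv := hf j j' (hj.trans hj'.symm)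
          exact Fin.ext (by rw [← Nat.div_add_mod j m, ← Nat.div_add_mod j' m, hdiv, show (j : ℕ) % m = j' % m from h])
    _ = m := card_range m

/-- Token `j` starts at position `j / m` and climbs `k` positions during the time interval
`[k (m k - 1 - j), k (m k - j)]`: the tokens move one after the other, the last one first. -/
def tokenPos (m k t : ℕ) (j : Fin (m * k)) : Fin (2 * k) :=
  ⟨j / m + min k (t - k * (m * k - 1 - j)), by have := Nat.div_lt_of_lt_mul j.isLt; omega⟩

section tokenPos

variable {m k s t : ℕ}

theorem tokenPos_mono (hst : s ≤ t) (j : Fin (m * k)) : tokenPos m k s j ≤ tokenPos m k t j := by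
  simp only [tokenPos, Fin.mk_le_mk]
  omega

theorem exists_tokenPos_lt (hs : s < m * k * k) (hst : s < t) :
    ∃ j, tokenPos m k s j < tokenPos m k t j := by
  have hk : 0 < k := Nat.pos_of_ne_zero (by rintro rfl; simp at hs)
  have hmk : 0 < m * k := Nat.pos_of_ne_zero (by intro h; simp [h] at hs)
  have hq : s / k < m * k := Nat.div_lt_of_lt_mul (by rwa [mul_comm])
  refine ⟨⟨m * k - 1 - s / k, Nat.lt_of_le_of_lt (Nat.sub_le _ _) (Nat.sub_lt hmk one_pos)⟩, ?_⟩
  have hj : m * k - 1 - (m * k - 1 - s / k) = s / k := Nat.sub_sub_self (Nat.le_sub_one_of_lt hq)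
  have hr : s % k < k := Nat.mod_lt _ hk
  simp only [tokenPos, Fin.mk_lt_mk, hj]
  have := Nat.div_add_mod s k
  omega

/-- Both `j / m` and the distance climbed are monotone in `j`, so tokens sharing a position lie
in one block `{q m, …, q m + m - 1}`. -/
theorem tokenPos_div_eq {j j' : Fin (m * k)} (h : tokenPos m k t j = tokenPos m k t j') :
    (j : ℕ) / m = j' / m := by
  wlog hjj : j ≤ j' generalizing j j'
  · exact (this h.symm (le_of_not_ge hjj)).symm
  have h₁ : (j : ℕ) / m ≤ j' / m := Nat.div_le_div_right hjj
  have h₂ : k * (m * k - 1 - j') ≤ k * (m * k - 1 - j) := Nat.mul_le_mul_left _ (by omega)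
  simp only [tokenPos, Fin.ext_iff] at h
  omega

theorem strictMonoOn_sum_tokenPos {b : Fin (2 * k) → ℤ} (hb : StrictMono b) :
    StrictMonoOn (fun t => ∑ j, b (tokenPos m k t j)) (Set.Iic (m * k * k)) := by
  intro s _ t ht hst
  obtain ⟨j, hj⟩ := exists_tokenPos_lt (lt_of_lt_of_le hst ht) hst
  exact sum_lt_sum (fun j _ => hb.monotone (tokenPos_mono hst.le j)) ⟨j, mem_univ _, hb hj⟩

end tokenPos

theorem card_boundedMultiplicitySums {k m : ℕ} {b : Fin (2 * k) → ℤ} (hb : StrictMono b) :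
    m * k ^ 2 + 1 ≤ #(boundedMultiplicitySums (2 * k) m (m * k) b) := by
  set walk := fun t => ∑ j, b (tokenPos m k t j)
  have hinj : Set.InjOn walk (range (m * k ^ 2 + 1)) :=
    (strictMonoOn_sum_tokenPos hb).injOn.mono fun t ht => by
      simp only [coe_range, Set.mem_Iio, Set.mem_Iic, sq, ← mul_assoc] at ht ⊢
      omega
  calc m * k ^ 2 + 1 = #((range (m * k ^ 2 + 1)).image walk) := by
        rw [card_image_of_injOn hinj, card_range]
    _ ≤ _ := card_le_card <| image_subset_iff.2 fun t _ =>
        sum_comp_mem_boundedMultiplicitySums _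
          (card_fiber_le_of_div_eq fun _ _ => tokenPos_div_eq) b

theorem multiplicity_sums_general (k m : ℕ) (hk : 1 ≤ k) (b : Fin (2 * k) → ℤ)
    (hmono : StrictMono b) :
    m * k ^ 2 + 1 ≤
      ((Finset.univ.filter
            (fun c : Fin (2 * k) → Fin (m + 1) => ∑ i, (c i : ℕ) = m * k)).image
          (fun c => ∑ i, ((c i : ℕ) : ℤ) * b i)).card ∧
    ∀ s ∈ (Finset.univ.filter
            (fun c : Fin (2 * k) → Fin (m + 1) => ∑ i, (c i : ℕ) = m * k)).image
          (fun c => ∑ i, ((c i : ℕ) : ℤ) * b i),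
      (m : ℤ) * ∑ i ∈ Finset.univ.filter (fun i : Fin (2 * k) => (i : ℕ) < k), b i ≤ s ∧
      s ≤ (m : ℤ) * ∑ i ∈ Finset.univ.filter (fun i : Fin (2 * k) => k ≤ (i : ℕ)), b i := by
  refine ⟨card_boundedMultiplicitySums hmono, fun s hs => ?_⟩
  obtain ⟨c, hc, rfl⟩ := mem_image.1 hs
  have hcm : ∀ i, (c i : ℕ) ≤ m := fun i => Nat.lt_succ_iff.1 (c i).isLt
  have hsum : ∑ i, (c i : ℕ) = m * k := (mem_filter.1 hc).2
  exact ⟨mul_sum_lower_half_le hk hmono.monotone hcm hsum,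
    sum_mul_le_mul_sum_upper_half hk hmono.monotone hcm hsum⟩

/-- Let `b₁ < ⋯ < b_{2k}` be positive integers and `m ≥ 1`. Among all sums
`∑ cᵢ bᵢ` with `0 ≤ cᵢ ≤ m` and `∑ cᵢ = mk`, there are at least `mk² + 1` distinct values,
all lying between `m(b₁ + ⋯ + b_k)` and `m(b_{k+1} + ⋯ + b_{2k})`. -/
theorem multiplicity_sums (k m : ℕ) (hk : 1 ≤ k) (hm : 1 ≤ m) (b : Fin (2 * k) → ℤ)
    (hpos : ∀ i, 0 < b i) (hmono : StrictMono b) :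
    m * k ^ 2 + 1 ≤
      ((Finset.univ.filter
            (fun c : Fin (2 * k) → Fin (m + 1) => ∑ i, (c i : ℕ) = m * k)).image
          (fun c => ∑ i, ((c i : ℕ) : ℤ) * b i)).card ∧
    ∀ s ∈ (Finset.univ.filter
            (fun c : Fin (2 * k) → Fin (m + 1) => ∑ i, (c i : ℕ) = m * k)).image
          (fun c => ∑ i, ((c i : ℕ) : ℤ) * b i),
      (m : ℤ) * ∑ i ∈ Finset.univ.filter (fun i : Fin (2 * k) => (i : ℕ) < k), b i ≤ s ∧
      s ≤ (m : ℤ) * ∑ i ∈ Finset.univ.filter (fun i : Fin (2 * k) => k ≤ (i : ℕ)), b i :=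
  multiplicity_sums_general k m hk b hmono
end
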